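/- (Online log-sum-exp block fusion correctness in FlashTPA decoding.) Let M ≥ 1 and let ℓ : {1,…,M} → ℝ be attention logits and v : {1,…,M} → ℝ^E value vectors. Let {1,…,M} = I₁ ⊔ I₂ be a partition into two nonempty disjoint blocks. For i = 1, 2 define m_i = max_{j ∈ I_i} ℓ_j, s_i = Σ_{j ∈ I_i} exp(ℓ_j − m_i), y_i = Σ_{j ∈ I_i} exp(ℓ_j − m_i) v_j, and set m = max(m₁, m₂), s = exp(m₁ − m) s₁ + exp(m₂ − m) s₂, y = exp(m₁ − m) y₁ + exp(m₂ − m) y₂. Then y / s = Σ_{j=1}^{M} softmax(ℓ)_j · v_j, where softmax(ℓ)_j = exp(ℓ_j) / Σ_{k=1}^{M} exp(ℓ_k). That is, the online max/sum-rescaling merge of two blocks computes exactly the full softmax-weighted value aggregation. -/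
import Mathlib


open Finset

/-- Online log-sum-exp block fusion correctness in FlashTPA decoding: merging
the per-block running maxima `m_i`, exponential sums `s_i`, and unnormalized
weighted-value accumulators `y_i` of two blocks by rescaling with
`exp(m_i − m)` computes exactly the full softmax-weighted value aggregation. -/
theorem flashtpa_online_lse_fusion (M E : ℕ) (hM : 1 ≤ M)
    (ℓ : Fin M → ℝ) (v : Fin M → Fin E → ℝ)
    (I₁ I₂ : Finset (Fin M)) (h₁ : I₁.Nonempty) (h₂ : I₂.Nonempty)
    (hdisj : Disjoint I₁ I₂) (hunion : I₁ ∪ I₂ = Finset.univ)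
    (m₁ m₂ s₁ s₂ : ℝ) (y₁ y₂ : Fin E → ℝ) (m s : ℝ) (y : Fin E → ℝ)
    (hm₁ : m₁ = I₁.sup' h₁ ℓ) (hm₂ : m₂ = I₂.sup' h₂ ℓ)
    (hs₁ : s₁ = ∑ j ∈ I₁, Real.exp (ℓ j - m₁))
    (hs₂ : s₂ = ∑ j ∈ I₂, Real.exp (ℓ j - m₂))
    (hy₁ : y₁ = ∑ j ∈ I₁, Real.exp (ℓ j - m₁) • v j)
    (hy₂ : y₂ = ∑ j ∈ I₂, Real.exp (ℓ j - m₂) • v j)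
    (hm : m = max m₁ m₂)
    (hs : s = Real.exp (m₁ - m) * s₁ + Real.exp (m₂ - m) * s₂)
    (hy : y = Real.exp (m₁ - m) • y₁ + Real.exp (m₂ - m) • y₂) :
    s⁻¹ • y = ∑ j, (Real.exp (ℓ j) / ∑ k, Real.exp (ℓ k)) • v j := by
  have key : ∀ (a : ℝ) (I : Finset (Fin M)),
      Real.exp (a - m) * ∑ j ∈ I, Real.exp (ℓ j - a)
        = ∑ j ∈ I, Real.exp (ℓ j - m) := by
    intro a I
    rw [Finset.mul_sum]
    refine Finset.sum_congr rfl fun j _ => ?_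
    rw [← Real.exp_add]; ring_nf
  have keyv : ∀ (a : ℝ) (I : Finset (Fin M)),
      Real.exp (a - m) • ∑ j ∈ I, Real.exp (ℓ j - a) • v j
        = ∑ j ∈ I, Real.exp (ℓ j - m) • v j := by
    intro a I
    rw [Finset.smul_sum]
    refine Finset.sum_congr rfl fun j _ => ?_
    rw [smul_smul, ← Real.exp_add]; ring_nf
  have hsum : s = ∑ j, Real.exp (ℓ j - m) := by
    rw [hs, hs₁, hs₂, key, key, ← Finset.sum_union hdisj, hunion]
  have hysum : y = ∑ j, Real.exp (ℓ j - m) • v j := by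
    rw [hy, hy₁, hy₂, keyv, keyv, ← Finset.sum_union hdisj, hunion]
  have hT : (0:ℝ) < ∑ k, Real.exp (ℓ k) := by
    apply Finset.sum_pos (fun k _ => Real.exp_pos _)
    exact Finset.univ_nonempty_iff.mpr (Fin.pos_iff_nonempty.mp hM)
  have hsm : s = Real.exp (-m) * ∑ k, Real.exp (ℓ k) := by
    rw [hsum, Finset.mul_sum]
    exact Finset.sum_congr rfl fun j _ => by rw [← Real.exp_add]; ring_nf
  rw [hysum, Finset.smul_sum]
  refine Finset.sum_congr rfl fun j _ => ?_
  rw [smul_smul]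
  congr 1
  rw [hsm, Real.exp_sub, mul_inv, Real.exp_neg, inv_inv, div_eq_mul_inv, div_eq_mul_inv]
  field_simp
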